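/- (Pfaff–Saalschütz theorem, terminating form.) Let n ∈ ℕ and A, B, C ∈ ℂ with C ∉ {0, −1, …, −(n−1)} and C−A−B ∉ {0, −1, …, −(n−1)}. Then Σ_{k=0}^{n} [(−n)_k (A)_k (B)_k] / [k! (C)_k (1+A+B−n−C)_k] = [(C−A)_n (C−B)_n] / [(C)_n (C−A−B)_n]. -/

import Mathlib

open Finset

/-- Pochhammer symbol `(a)_k = a (a+1) ⋯ (a+k-1)`. -/
noncomputable def poch (a : ℂ) (k : ℕ) : ℂ := ∏ i ∈ Finset.range k, (a + i)

/-- The Wilson polynomial `W_n(z; t1,t2,t3,t4)` in the variable `z` (with `x = -z²`). -/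
noncomputable def wilson (n : ℕ) (z t1 t2 t3 t4 : ℂ) : ℂ :=
  poch (t1 + t2) n * poch (t1 + t3) n * poch (t1 + t4) n *
    ∑ k ∈ Finset.range (n + 1),
      (poch (-(n : ℂ)) k * poch (t1 + t2 + t3 + t4 + (n : ℂ) - 1) k *
        poch (t1 + z) k * poch (t1 - z) k) /
      ((k.factorial : ℂ) * poch (t1 + t2) k * poch (t1 + t3) k * poch (t1 + t4) k)

/-! Multiplying the `k`-th term by `(C)ₙ (C-A-B)ₙ` clears every denominator, thanks to
`(-n)ₖ = (-1)ᵏ k! (n choose k)` and the reflection `(1-a-k)ₖ = (-1)ᵏ (a)ₖ`; what remains is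
`∑ₖ (n choose k) (A)ₖ (B)ₖ (C+k)ₙ₋ₖ (C-A-B)ₙ₋ₖ = (C-A)ₙ (C-B)ₙ`. This follows from the
Chu–Vandermonde identity `(x+y)ₙ = ∑ₖ (n choose k) (x)ₖ (y)ₙ₋ₖ` used three times: expand
`(C+k)ₙ₋ₖ` along `C+k = (A+k) + (C-A)`, regroup by `m = k + j`, then sum over `k` (giving
`(C-A)ₙ`) and over `m` (giving `(C-B)ₙ`). -/

lemma poch_ne_zero {a : ℂ} {k : ℕ} (h : ∀ i < k, a + i ≠ 0) : poch a k ≠ 0 :=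
  prod_ne_zero_iff.2 fun i hi => h i (mem_range.1 hi)

section Polynomial

open Polynomial

lemma poch_eq_eval_ascPochhammer (a : ℂ) (k : ℕ) : poch a k = (ascPochhammer ℂ k).eval a := by
  induction k with
  | zero => simp [poch]
  | succ k ih => rw [poch, prod_range_succ, ← poch, ih, ascPochhammer_succ_eval]

lemma poch_add (a : ℂ) (m k : ℕ) : poch a (m + k) = poch a m * poch (a + m) k := by
  simp [poch_eq_eval_ascPochhammer, ← ascPochhammer_mul, eval_comp]

lemma poch_neg_eq_descPochhammer (r : ℂ) (k : ℕ) :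
    poch (-r) k = (-1) ^ k * (descPochhammer ℤ k).smeval r := by
  rw [poch_eq_eval_ascPochhammer, ascPochhammer_eval_neg_eq_descPochhammer, ← aeval_eq_smeval,
    ← descPochhammer_map (algebraMap ℤ ℂ), aeval_def, eval_map]

lemma poch_neg_natCast (n k : ℕ) :
    poch (-(n : ℂ)) k = (-1) ^ k * k.factorial * n.choose k := by
  rw [poch_eq_eval_ascPochhammer, ascPochhammer_eval_neg_eq_descPochhammer,
    descPochhammer_eval_eq_descFactorial, Nat.descFactorial_eq_factorial_mul_choose]
  push_cast
  ring

lemma poch_one_sub_sub (a : ℂ) (k : ℕ) : poch (1 - a - k) k = (-1) ^ k * poch a k := by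
  rw [show 1 - a - k = -(a + k - 1) by ring, poch_eq_eval_ascPochhammer,
    ascPochhammer_eval_neg_eq_descPochhammer, descPochhammer_eval_eq_ascPochhammer,
    poch_eq_eval_ascPochhammer]
  ring_nf

-- Mathlib's Chu–Vandermonde identity is for falling factorials; `(x)ₖ = (-1)ᵏ (-x)ₖ↓` transfers it.
lemma poch_add_eq_sum_choose (x y : ℂ) (n : ℕ) :
    poch (x + y) n = ∑ k ∈ range (n + 1), n.choose k * (poch x k * poch y (n - k)) := by
  rw [← Nat.sum_antidiagonal_eq_sum_range_succ fun i j => n.choose i * (poch x i * poch y j),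
    ← neg_neg (x + y), poch_neg_eq_descPochhammer, neg_add,
    Ring.descPochhammer_smeval_add n (Commute.all _ _), mul_sum]
  refine sum_congr rfl fun ij hij => ?_
  rw [← neg_neg x, ← neg_neg y, poch_neg_eq_descPochhammer, poch_neg_eq_descPochhammer,
    neg_neg, neg_neg, ← mem_antidiagonal.1 hij, pow_add]
  ring

end Polynomial

lemma poch_sub_mul_poch_add_eq_sum_choose (x y : ℂ) {m n : ℕ} (hmn : m ≤ n) :
    poch y (n - m) * poch (x + y + (n - m : ℕ)) m
      = ∑ k ∈ range (m + 1), m.choose k * (poch x k * poch y (n - k)) := by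
  rw [add_assoc, poch_add_eq_sum_choose, mul_sum]
  refine sum_congr rfl fun k hk => ?_
  rw [show n - k = n - m + (m - k) by grind, poch_add]
  ring

lemma pfaff_saalschuetz_cleared (n : ℕ) (A B C : ℂ) :
    ∑ k ∈ range (n + 1), n.choose k * poch A k * poch B k
        * poch (C + k) (n - k) * poch (C - A - B) (n - k)
      = poch (C - A) n * poch (C - B) n := by
  let F : ℕ → ℕ → ℂ := fun k j => n.choose k * (n - k).choose j * poch A (k + j) * poch B k
    * poch (C - A) (n - k - j) * poch (C - A - B) (n - k)
  have expand : ∀ k ∈ range (n + 1), n.choose k * poch A k * poch B k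
      * poch (C + k) (n - k) * poch (C - A - B) (n - k) = ∑ j ∈ range (n + 1 - k), F k j := by
    intro k hk
    rw [show C + k = (A + k) + (C - A) by ring, poch_add_eq_sum_choose, mul_sum, sum_mul,
      show n - k + 1 = n + 1 - k by grind]
    refine sum_congr rfl fun j _ => ?_
    simp only [F, poch_add]
    ring
  have collapse : ∀ m ∈ range (n + 1), ∑ k ∈ range (m + 1), F k (m - k)
      = poch (C - A) n * (n.choose m * (poch A m * poch (C - A - B) (n - m))) := by
    intro m hm
    have hmn : m ≤ n := by grind
    have hsplit : poch (C - A) n = poch (C - A) (n - m) * poch (C - A + (n - m : ℕ)) m := by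
      rw [← poch_add, Nat.sub_add_cancel hmn]
    calc ∑ k ∈ range (m + 1), F k (m - k)
        = n.choose m * poch A m * poch (C - A) (n - m)
            * ∑ k ∈ range (m + 1), m.choose k * (poch B k * poch (C - A - B) (n - k)) := by
          rw [mul_sum]
          refine sum_congr rfl fun k hk => ?_
          have hkm : k ≤ m := by grind
          have hchoose : (n.choose k : ℂ) * (n - k).choose (m - k) = n.choose m * m.choose k := by
            exact_mod_cast (Nat.choose_mul hkm).symm
          simp only [F]
          rw [show k + (m - k) = m by grind, show n - k - (m - k) = n - m by grind]
          linear_combination poch A m * poch B k * poch (C - A) (n - m)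
            * poch (C - A - B) (n - k) * hchoose
      _ = _ := by
          rw [← poch_sub_mul_poch_add_eq_sum_choose _ _ hmn, hsplit]
          ring_nf
  rw [sum_congr rfl expand, ← sum_range_diag_flip, sum_congr rfl collapse, ← mul_sum,
    ← poch_add_eq_sum_choose]
  ring_nf

lemma pfaff_saalschuetz_term_eq {n k : ℕ} (hkn : k ≤ n) (A B C : ℂ) (hC : poch C n ≠ 0)
    (hD : poch (C - A - B) n ≠ 0) :
    (poch (-(n : ℂ)) k * poch A k * poch B k) /
        ((k.factorial : ℂ) * poch C k * poch (1 + A + B - (n : ℂ) - C) k)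
      = n.choose k * poch A k * poch B k * poch (C + k) (n - k) * poch (C - A - B) (n - k)
          / (poch C n * poch (C - A - B) n) := by
  have hCsplit : poch C n = poch C k * poch (C + k) (n - k) := by
    rw [← poch_add, Nat.add_sub_cancel' hkn]
  have hDsplit : poch (C - A - B) n
      = poch (C - A - B) (n - k) * poch (C - A - B + (n - k : ℕ)) k := by
    rw [← poch_add, Nat.sub_add_cancel hkn]
  have hreflect : 1 + A + B - n - C = 1 - (C - A - B + (n - k : ℕ)) - k := by
    push_cast [Nat.cast_sub hkn]
    ring
  rw [hCsplit, mul_ne_zero_iff] at hC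
  rw [hDsplit, mul_ne_zero_iff] at hD
  rw [poch_neg_natCast, hreflect, poch_one_sub_sub, hCsplit, hDsplit, div_eq_div_iff
    (by simp [hC.1, hD.2, Nat.factorial_ne_zero]) (by simp [hC, hD])]
  ring

theorem pfaff_saalschuetz (n : ℕ) (A B C : ℂ)
    (hC : ∀ k : ℕ, k < n → C + k ≠ 0)
    (hCAB : ∀ k : ℕ, k < n → C - A - B + k ≠ 0) :
    ∑ k ∈ Finset.range (n + 1),
        (poch (-(n : ℂ)) k * poch A k * poch B k) /
          ((k.factorial : ℂ) * poch C k * poch (1 + A + B - (n : ℂ) - C) k)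
      = (poch (C - A) n * poch (C - B) n) / (poch C n * poch (C - A - B) n) := by
  have hCn : poch C n ≠ 0 := poch_ne_zero hC
  have hDn : poch (C - A - B) n ≠ 0 := poch_ne_zero hCAB
  rw [sum_congr rfl fun k hk =>
      pfaff_saalschuetz_term_eq (mem_range_succ_iff.1 hk) A B C hCn hDn,
    ← sum_div, pfaff_saalschuetz_cleared]
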